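/- arXiv:1904.00286 — 8 statements merged into one kernel-verified Lean document; each statement's English description precedes it below -/
import Mathlib

section
/- Let A be a commutative ring and F ∈ A[y] a monic polynomial of degree d, where d is invertible in A (e.g. the characteristic of A does not divide d). Let N be a positive integer dividing d. Then there exists a unique monic polynomial ψ ∈ A[y] of degree d/N such that deg(F − ψ^N) < d − d/N. -/
open Polynomial Finset

private lemma approx_exists_aux {A : Type*} [CommRing A] (e M : ℕ) (u : A)
    (hu : ((M + 1 : ℕ) : A) * u = 1) (F : A[X]) (hF : F.Monic)
    (hdeg : F.natDegree = e * (M + 1)) :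
    ∀ j, j ≤ e → ∃ ψ : A[X], ψ.Monic ∧ ψ.natDegree = e ∧
      (F - ψ ^ (M + 1)).degree < ((e * (M + 1) - j : ℕ) : WithBot ℕ) := by
  rcases subsingleton_or_nontrivial A with hA | hA
  · intro j _
    have he : e = 0 := by
      have : F = 0 := Subsingleton.elim _ _
      have h0 : e * (M + 1) = 0 := by rw [← hdeg, this, natDegree_zero]
      rcases Nat.mul_eq_zero.mp h0 with h | h
      · exact h
      · omega
    refine ⟨1, monic_one, by simp [he], ?_⟩
    rw [Subsingleton.elim (F - 1 ^ (M + 1)) 0, degree_zero]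
    exact WithBot.bot_lt_coe _
  intro j
  induction j with
  | zero =>
    intro _
    refine ⟨X ^ e, monic_X_pow e, natDegree_X_pow e, ?_⟩
    rw [Nat.sub_zero, ← pow_mul]
    have h1 : F.degree = ((e * (M + 1) : ℕ) : WithBot ℕ) := by
      rw [degree_eq_natDegree hF.ne_zero, hdeg]
    have := degree_sub_lt (q := X ^ (e * (M + 1)))
      (by rw [h1, degree_X_pow]) hF.ne_zero
      (by rw [hF.leadingCoeff, (monic_X_pow _).leadingCoeff])
    rwa [h1] at this
  | succ j IH =>
    intro hje
    obtain ⟨ψ, hmon, hdegψ, herr⟩ := IH (by omega)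
    set s : ℕ := e - 1 - j with hs
    have hes : e = s + j + 1 := by omega
    set m : ℕ := e * M + s with hm
    have hdd : e * (M + 1) = e * M + e := by ring
    have hmj : e * (M + 1) - j = m + 1 := by omega
    have hmj1 : e * (M + 1) - (j + 1) = m := by omega
    set G : A[X] := F - ψ ^ (M + 1) with hG
    set c : A := G.coeff m with hc
    set a : A := c * u with ha
    set t : A[X] := C a * X ^ s with ht
    have hψdeg : ψ.degree = (e : WithBot ℕ) := by
      rw [degree_eq_natDegree hmon.ne_zero, hdegψ]
    have hdegt : t.degree < ψ.degree := by
      refine lt_of_le_of_lt (degree_C_mul_X_pow_le s a) ?_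
      rw [hψdeg]
      exact_mod_cast (by omega : s < e)
    have hmon' : (ψ + t).Monic := hmon.add_of_left hdegt
    have hdegψ' : (ψ + t).natDegree = e := by
      apply natDegree_eq_of_degree_eq_some
      rw [degree_add_eq_left_of_degree_lt hdegt, hψdeg]
    refine ⟨ψ + t, hmon', hdegψ', ?_⟩
    rw [hmj1]
    rw [degree_lt_iff_coeff_zero]
    intro k hk
    have key : F - (ψ + t) ^ (M + 1) =
        G - C (a * ((M + 1 : ℕ) : A)) * (ψ ^ M * X ^ s)
          - ∑ i ∈ Finset.range M, ψ ^ i * t ^ (M + 1 - i) * ((M + 1).choose i : A[X]) := by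
      rw [add_pow, Finset.sum_range_succ, Finset.sum_range_succ, hG]
      simp only [Nat.sub_self, pow_zero, Nat.choose_self, Nat.cast_one, mul_one,
        Nat.add_sub_cancel_left, Nat.add_sub_cancel, pow_one, Nat.choose_succ_self_right,
        ht, map_mul, ← C_eq_natCast]
      ring
    rw [key]
    have hGk : ∀ k', m < k' → G.coeff k' = 0 := by
      intro k' hk'
      apply coeff_eq_zero_of_degree_lt
      refine lt_of_lt_of_le herr ?_
      rw [hmj]
      exact_mod_cast (by omega : m + 1 ≤ k')
    have hRk : (∑ i ∈ Finset.range M, ψ ^ i * t ^ (M + 1 - i) * ((M + 1).choose i : A[X])).coeff k = 0 := by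
      rw [finset_sum_coeff]
      apply Finset.sum_eq_zero
      intro i hi
      rw [Finset.mem_range] at hi
      apply coeff_eq_zero_of_natDegree_lt
      have h1 : (ψ ^ i * t ^ (M + 1 - i) * ((M + 1).choose i : A[X])).natDegree
          ≤ e * i + s * (M + 1 - i) := by
        have ha1 : (ψ ^ i * t ^ (M + 1 - i) * ((M + 1).choose i : A[X])).natDegree
            ≤ (ψ ^ i * t ^ (M + 1 - i)).natDegree + ((M + 1).choose i : A[X]).natDegree :=
          natDegree_mul_le
        have ha2 : (ψ ^ i * t ^ (M + 1 - i)).natDegree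
            ≤ (ψ ^ i).natDegree + (t ^ (M + 1 - i)).natDegree := natDegree_mul_le
        have ha3 : (ψ ^ i).natDegree ≤ i * e := le_of_le_of_eq natDegree_pow_le (by rw [hdegψ])
        have ha4 : (t ^ (M + 1 - i)).natDegree ≤ (M + 1 - i) * t.natDegree := natDegree_pow_le
        have ha5 : t.natDegree ≤ s := by
          refine le_trans natDegree_mul_le ?_
          simp [natDegree_X_pow]
        have ha6 : (M + 1 - i) * t.natDegree ≤ (M + 1 - i) * s := Nat.mul_le_mul_left _ ha5
        have ha7 : ((M + 1).choose i : A[X]).natDegree = 0 := natDegree_natCast _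
        have ha8 : i * e = e * i := Nat.mul_comm _ _
        have ha9 : (M + 1 - i) * s = s * (M + 1 - i) := Nat.mul_comm _ _
        omega
      refine lt_of_le_of_lt h1 (lt_of_lt_of_le ?_ hk)
      obtain ⟨q, hq⟩ : ∃ q, M = i + q := ⟨M - i, by omega⟩
      have hq1 : 1 ≤ q := by omega
      have hb1 : s * q < e * q :=
        Nat.mul_lt_mul_of_lt_of_le (by omega) le_rfl (by omega)
      have hMi : M + 1 - i = q + 1 := by omega
      have hb2 : s * (M + 1 - i) = s * q + s := by rw [hMi]; ring
      have hb3 : e * M = e * i + e * q := by rw [hq]; ring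
      omega
    have hmid : (C (a * ((M + 1 : ℕ) : A)) * (ψ ^ M * X ^ s)).coeff k
        = a * ((M + 1 : ℕ) : A) * (ψ ^ M).coeff (k - s) := by
      rw [coeff_C_mul, coeff_mul_X_pow', if_pos (by omega : s ≤ k)]
    have hψM : (ψ ^ M).natDegree = e * M := by
      rw [hmon.natDegree_pow, hdegψ, Nat.mul_comm]
    simp only [coeff_sub, hmid, hRk, sub_zero]
    rcases eq_or_lt_of_le hk with hkm | hkm
    · subst hkm
      have h5 : (ψ ^ M).coeff (m - s) = 1 := by
        have h6 : m - s = (ψ ^ M).natDegree := by rw [hψM]; omega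
        rw [h6]; exact (hmon.pow M).coeff_natDegree
      have h7 : a * ((M + 1 : ℕ) : A) = c := by
        rw [ha, mul_assoc, mul_comm u, hu, mul_one]
      rw [h5, mul_one, h7, ← hc, sub_self]
    · have h5 : (ψ ^ M).coeff (k - s) = 0 := by
        apply coeff_eq_zero_of_natDegree_lt
        rw [hψM]; omega
      rw [h5, mul_zero, sub_zero]
      exact hGk k hkm


private lemma approx_unique_aux {A : Type*} [CommRing A] (e M : ℕ) (u : A)
    (hu : ((M + 1 : ℕ) : A) * u = 1) (ψ₁ ψ₂ : A[X])
    (h1mon : ψ₁.Monic) (h2mon : ψ₂.Monic)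
    (hd1 : ψ₁.natDegree = e) (hd2 : ψ₂.natDegree = e)
    (hlt : (ψ₁ ^ (M + 1) - ψ₂ ^ (M + 1)).degree < ((e * M : ℕ) : WithBot ℕ)) :
    ψ₁ = ψ₂ := by
  rcases subsingleton_or_nontrivial A with hA | hA
  · exact Subsingleton.elim _ _
  by_contra hne
  have hD0 : ψ₁ - ψ₂ ≠ 0 := sub_ne_zero.mpr hne
  set S : A[X] := ∑ i ∈ Finset.range (M + 1), ψ₁ ^ i * ψ₂ ^ (M + 1 - 1 - i) with hS
  have hnd : ∀ i ∈ Finset.range (M + 1), (ψ₁ ^ i * ψ₂ ^ (M + 1 - 1 - i)).natDegree = e * M := by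
    intro i hi
    rw [Finset.mem_range] at hi
    rw [Monic.natDegree_mul (h1mon.pow i) (h2mon.pow _), h1mon.natDegree_pow,
      h2mon.natDegree_pow, hd1, hd2]
    have h1 : M + 1 - 1 - i = M - i := by omega
    rw [h1, ← Nat.add_mul]
    have h2 : i + (M - i) = M := by omega
    rw [h2, Nat.mul_comm]
  have hScoeff : S.coeff (e * M) = ((M + 1 : ℕ) : A) := by
    rw [hS, finset_sum_coeff]
    have hone : ∀ i ∈ Finset.range (M + 1),
        (ψ₁ ^ i * ψ₂ ^ (M + 1 - 1 - i)).coeff (e * M) = (1 : A) := by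
      intro i hi
      rw [← hnd i hi]
      exact ((h1mon.pow i).mul (h2mon.pow _)).coeff_natDegree
    rw [Finset.sum_congr rfl hone, Finset.sum_const, Finset.card_range, nsmul_eq_mul, mul_one]
  have hM1ne : ((M + 1 : ℕ) : A) ≠ 0 := by
    intro h
    have : (1 : A) = 0 := by rw [← hu, h, zero_mul]
    exact one_ne_zero this
  have hSdegle : S.degree ≤ ((e * M : ℕ) : WithBot ℕ) := by
    refine (degree_sum_le _ _).trans (Finset.sup_le fun i hi => ?_)
    rw [degree_eq_natDegree ((h1mon.pow i).mul (h2mon.pow _)).ne_zero, hnd i hi]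
  have hSdeg : S.degree = ((e * M : ℕ) : WithBot ℕ) :=
    le_antisymm hSdegle (le_degree_of_ne_zero (by rw [hScoeff]; exact hM1ne))
  have hSnd : S.natDegree = e * M := natDegree_eq_of_degree_eq_some hSdeg
  have hSlc : S.leadingCoeff = ((M + 1 : ℕ) : A) := by
    rw [leadingCoeff, hSnd, hScoeff]
  have hlcne : S.leadingCoeff * (ψ₁ - ψ₂).leadingCoeff ≠ 0 := by
    rw [hSlc]
    intro h
    apply hD0
    apply leadingCoeff_eq_zero.mp
    calc (ψ₁ - ψ₂).leadingCoeff = (((M + 1 : ℕ) : A) * u) * (ψ₁ - ψ₂).leadingCoeff := by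
            rw [hu, one_mul]
      _ = u * (((M + 1 : ℕ) : A) * (ψ₁ - ψ₂).leadingCoeff) := by ring
      _ = 0 := by rw [h, mul_zero]
  have hprod : (S * (ψ₁ - ψ₂)).degree = ((e * M : ℕ) : WithBot ℕ) + (ψ₁ - ψ₂).degree := by
    rw [degree_mul' hlcne, hSdeg]
  have hge : ((e * M : ℕ) : WithBot ℕ) ≤ (S * (ψ₁ - ψ₂)).degree := by
    rw [hprod, degree_eq_natDegree hD0]
    have : ((e * M : ℕ) : WithBot ℕ) + ((ψ₁ - ψ₂).natDegree : WithBot ℕ)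
        = ((e * M + (ψ₁ - ψ₂).natDegree : ℕ) : WithBot ℕ) := by push_cast; ring
    rw [this]
    exact_mod_cast Nat.le_add_right _ _
  have hkey : S * (ψ₁ - ψ₂) = ψ₁ ^ (M + 1) - ψ₂ ^ (M + 1) := geom_sum₂_mul ψ₁ ψ₂ (M + 1)
  rw [hkey] at hge
  exact absurd (lt_of_le_of_lt hge hlt) (lt_irrefl _)


/-- Existence and uniqueness of the `N`-th approximate root:
for a monic `F ∈ A[y]` of degree `d` with `d` invertible in `A` and `N ∣ d`,
there is a unique monic `ψ` of degree `d / N` with `deg (F - ψ ^ N) < d - d / N`. -/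
theorem approximate_root_exists_unique {A : Type*} [CommRing A]
    (F : Polynomial A) (d N : ℕ) (hF : F.Monic) (hdeg : F.natDegree = d)
    (hd : IsUnit (d : A)) (hN : N ∣ d) (hNpos : 0 < N) :
    ∃! ψ : Polynomial A, ψ.Monic ∧ ψ.natDegree = d / N ∧
      (F - ψ ^ N).degree < ((d - d / N : ℕ) : WithBot ℕ) := by
  obtain ⟨M, rfl⟩ : ∃ M, N = M + 1 := ⟨N - 1, by omega⟩
  set e : ℕ := d / (M + 1) with he
  have hed : e * (M + 1) = d := Nat.div_mul_cancel hN
  have hNu : IsUnit ((M + 1 : ℕ) : A) :=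
    isUnit_of_dvd_unit (by exact_mod_cast Nat.cast_dvd_cast (α := A) hN) hd
  obtain ⟨u, hu⟩ := hNu.exists_right_inv
  have heM : d - e = e * M := by
    have : e * (M + 1) = e * M + e := by ring
    omega
  obtain ⟨ψ, hmon, hdegψ, herr⟩ :=
    approx_exists_aux e M u hu F hF (by rw [hdeg, hed]) e le_rfl
  rw [hed] at herr
  refine ⟨ψ, ⟨hmon, hdegψ, by rw [heM]; exact heM ▸ herr⟩, ?_⟩
  rintro ψ' ⟨hmon', hdegψ', herr'⟩
  refine approx_unique_aux e M u hu ψ' ψ hmon' hmon hdegψ' hdegψ ?_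
  have hid : ψ' ^ (M + 1) - ψ ^ (M + 1) = (F - ψ ^ (M + 1)) - (F - ψ' ^ (M + 1)) := by
    ring
  rw [hid]
  refine lt_of_le_of_lt (degree_sub_le _ _) (max_lt ?_ ?_)
  · exact heM ▸ herr
  · exact heM ▸ herr'
end

section
/- Let A be a commutative ring, F ∈ A[y] monic of degree d with d invertible in A, N a divisor of d, and ψ ∈ A[y] monic of degree d/N. Write the ψ-adic expansion F = Σ_{i=0}^{N} a_i ψ^i with deg(a_i) < d/N. Then ψ is the N-th approximate root of F if and only if a_{N−1} = 0. -/
open Polynomial in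
private lemma deg_term_lt' {A : Type*} [CommRing A] [Nontrivial A] {p ψ : Polynomial A}
    {m : ℕ} (hp : p.degree < (m : WithBot ℕ)) (hψ : ψ.Monic) (hψdeg : ψ.natDegree = m)
    {i k : ℕ} (hik : i < k) :
    (p * ψ ^ i).degree < ((k * m : ℕ) : WithBot ℕ) := by
  rcases eq_or_ne p 0 with rfl | hp0
  · rw [zero_mul, degree_zero]
    exact WithBot.bot_lt_coe _
  · have hmono : (ψ ^ i).Monic := hψ.pow _
    rw [hmono.degree_mul, degree_eq_natDegree hp0,
      degree_eq_natDegree hmono.ne_zero, hψ.natDegree_pow, hψdeg]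
    have hplt : p.natDegree < m := by
      rwa [degree_eq_natDegree hp0, Nat.cast_lt] at hp
    have : p.natDegree + i * m < k * m := by
      calc p.natDegree + i * m < m + i * m := by omega
        _ = (i+1) * m := by ring
        _ ≤ k * m := Nat.mul_le_mul_right m hik
    exact_mod_cast this

open Finset Polynomial in
private lemma deg_sum_lt' {A : Type*} [CommRing A] [Nontrivial A] {ψ : Polynomial A}
    {m : ℕ} (a : ℕ → Polynomial A) (hsmall : ∀ i, (a i).degree < (m : WithBot ℕ))
    (hψ : ψ.Monic) (hψdeg : ψ.natDegree = m) (k : ℕ) :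
    (∑ i ∈ range k, a i * ψ ^ i).degree < ((k * m : ℕ) : WithBot ℕ) := by
  refine lt_of_le_of_lt (degree_sum_le _ _) ?_
  rw [Finset.sup_lt_iff (WithBot.bot_lt_coe _)]
  intro i hi
  exact deg_term_lt' (hsmall i) hψ hψdeg (mem_range.mp hi)

open Finset in
/-- A monic `ψ` of degree `d / N` is the `N`-th approximate root of `F`
(i.e. `deg (F - ψ ^ N) < d - d / N`) if and only if the coefficient `a_{N-1}` in the
`ψ`-adic expansion `F = Σ_{i=0}^{N} a_i ψ^i` (with `deg a_i < d / N`) vanishes. -/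
theorem approximate_root_iff_adic_coeff_vanishes {A : Type*} [CommRing A]
    (F ψ : Polynomial A) (d N : ℕ) (hF : F.Monic) (hdeg : F.natDegree = d)
    (hd : IsUnit (d : A)) (hN : N ∣ d) (hNpos : 0 < N)
    (hψ : ψ.Monic) (hψdeg : ψ.natDegree = d / N)
    (a : ℕ → Polynomial A)
    (hexp : F = ∑ i ∈ range (N + 1), a i * ψ ^ i)
    (hsmall : ∀ i, (a i).degree < ((d / N : ℕ) : WithBot ℕ)) :
    (F - ψ ^ N).degree < ((d - d / N : ℕ) : WithBot ℕ) ↔ a (N - 1) = 0 := by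
  open Polynomial in
  rcases subsingleton_or_nontrivial A with hs | hn
  · constructor
    · intro _; exact Subsingleton.elim _ _
    · intro _
      have h0 : F - ψ ^ N = 0 := Subsingleton.elim _ _
      rw [h0, degree_zero]
      exact WithBot.bot_lt_coe _
  · set m := d / N with hm
    have hdm : d = N * m := (Nat.mul_div_cancel' hN).symm
    have hFdeg : F.degree = (d : WithBot ℕ) := by
      rw [degree_eq_natDegree hF.ne_zero, hdeg]
    -- a N = 1
    have hsumN : (∑ i ∈ range N, a i * ψ ^ i).degree < (d : WithBot ℕ) := by
      have := deg_sum_lt' a hsmall hψ hψdeg N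
      rwa [← hdm] at this
    have hFN : a N * ψ ^ N = F - ∑ i ∈ range N, a i * ψ ^ i := by
      rw [hexp, Finset.sum_range_succ]; ring
    have hdegFN : (a N * ψ ^ N).degree = (d : WithBot ℕ) := by
      rw [hFN, degree_sub_eq_left_of_degree_lt (by rwa [hFdeg]), hFdeg]
    have hψN : (ψ ^ N).Monic := hψ.pow _
    have hψNdeg : (ψ ^ N).degree = (d : WithBot ℕ) := by
      rw [degree_eq_natDegree hψN.ne_zero, hψ.natDegree_pow, hψdeg, ← hdm]
    have haN0 : a N ≠ 0 := by
      intro h; rw [h, zero_mul, degree_zero] at hdegFN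
      exact (WithBot.bot_ne_coe) hdegFN
    have haNdeg : (a N).natDegree = 0 := by
      have h1 : (a N).degree + (d : WithBot ℕ) = (d : WithBot ℕ) := by
        rw [← hψNdeg, ← hψN.degree_mul, hdegFN, hψNdeg]
      rw [degree_eq_natDegree haN0] at h1
      have h2 : (a N).natDegree + d = d := by exact_mod_cast h1
      omega
    have haNlc : (a N).leadingCoeff = 1 := by
      have h1 : (a N * ψ ^ N).leadingCoeff = 1 := by
        rw [hFN, sub_eq_add_neg, add_comm,
          leadingCoeff_add_of_degree_lt (by rw [degree_neg, hFdeg]; exact hsumN)]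
        exact hF
      rwa [leadingCoeff_mul_monic hψN] at h1
    have haN : a N = 1 := ((Monic.def.mpr haNlc).natDegree_eq_zero).mp haNdeg
    -- key decomposition
    have hNsub : N = (N - 1) + 1 := (Nat.succ_pred_eq_of_pos hNpos).symm
    have hkey : F - ψ ^ N = a (N-1) * ψ ^ (N-1) + ∑ i ∈ range (N-1), a i * ψ ^ i := by
      rw [hexp, Finset.sum_range_succ, haN, one_mul]
      rw [show (∑ i ∈ range N, a i * ψ ^ i) = a (N-1) * ψ ^ (N-1) + ∑ i ∈ range (N-1), a i * ψ ^ i by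
        conv_lhs => rw [hNsub, Finset.sum_range_succ]
        ring]
      ring
    have hdm2 : d - m = (N-1) * m := by
      have h : N * m = (N-1) * m + m := by
        conv_lhs => rw [hNsub]
        ring
      omega
    have hS : (∑ i ∈ range (N-1), a i * ψ ^ i).degree < (((N-1) * m : ℕ) : WithBot ℕ) :=
      deg_sum_lt' a hsmall hψ hψdeg (N-1)
    rw [hkey, hdm2]
    constructor
    · intro h
      by_contra ha
      have hψN1 : (ψ ^ (N-1)).Monic := hψ.pow _
      have hfirst : (((N-1) * m : ℕ) : WithBot ℕ) ≤ (a (N-1) * ψ ^ (N-1)).degree := by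
        rw [hψN1.degree_mul, degree_eq_natDegree ha,
          degree_eq_natDegree hψN1.ne_zero, hψ.natDegree_pow, hψdeg]
        exact_mod_cast Nat.le_add_left _ _
      have := degree_add_eq_left_of_degree_lt (lt_of_lt_of_le hS hfirst)
      rw [this] at h
      exact absurd (lt_of_le_of_lt hfirst h) (lt_irrefl _)
    · intro ha
      rw [ha, zero_mul, zero_add]
      exact hS
end

section
/- Let A be a commutative ring, F ∈ A[y] monic of degree d with d invertible, N a divisor of d, and φ ∈ A[y] monic of degree d/N with φ-adic expansion F = Σ_{i=0}^{N} a_i φ^i. Define the Tschirnhausen transform τ_F(φ) := φ + a_{N−1}/N. Then the τ_F(φ)-adic expansion F = Σ a'_i τ_F(φ)^i satisfies deg(a'_{N−1}) < deg(a_{N−1}) whenever a_{N−1} ≠ 0. In particular, after at most d/N iterations of τ_F starting from any monic φ of degree d/N, one obtains the N-th approximate root of F. -/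
/-
Write `F = φ ^ N + a φ ^ (N - 1) + r` with `deg a < m = deg φ` and `deg r < (N - 1) m`, and put
`ψ = φ + b` with `N b = a`. Then `φ ^ (N - 1) (φ + a) = (ψ - b) ^ (N - 1) (ψ + (N - 1) b)`, whose
binomial expansion agrees with `ψ ^ N` except for terms divisible by `b ^ 2`, of degree at most
`(N - 2) m + 2 deg a`. Hence `deg (F - ψ ^ N) < (N - 1) m + deg a`, i.e. the coefficient of
`ψ ^ (N - 1)` in the `ψ`-adic expansion has degree `< deg a`. Since this coefficient starts in
degree `< m`, it vanishes after at most `m` steps, and its vanishing means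
`deg (F - ψ ^ N) < (N - 1) m`.
-/

open Finset

namespace Polynomial

variable {R : Type*} [CommRing R] {m n : ℕ}

noncomputable def adicCoeff (F φ : R[X]) (i : ℕ) : R[X] := (F /ₘ φ ^ i) %ₘ φ

/-- With `u = (n + 1)⁻¹` this is `τ_F(φ) = φ + a_{N-1} / N` for `N = n + 1`. -/
noncomputable def tschirnhausen (F : R[X]) (u : R) (n : ℕ) (φ : R[X]) : R[X] :=
  φ + C u * adicCoeff F φ n

theorem degree_divByMonic_lt_iff [Nontrivial R] {p q : R[X]} (hq : q.Monic) (k : ℕ) :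
    (p /ₘ q).degree < k ↔ p.degree < q.degree + k := by
  rcases lt_or_ge p.degree q.degree with hpq | hqp
  · rw [(divByMonic_eq_zero_iff hq).2 hpq, degree_zero]
    exact iff_of_true (WithBot.bot_lt_coe k)
      (hpq.trans_le (le_add_of_nonneg_right Nat.WithBot.coe_nonneg))
  · rw [← degree_add_divByMonic hq hqp, degree_eq_natDegree hq.ne_zero]
    exact (WithBot.add_lt_add_iff_left WithBot.coe_ne_bot).symm

theorem Monic.degree_pow_of_natDegree [Nontrivial R] {ψ : R[X]} (hψ : ψ.Monic)
    (hψd : ψ.natDegree = m) (n : ℕ) : (ψ ^ n).degree = ↑(n * m) := by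
  rw [degree_eq_natDegree (hψ.pow n).ne_zero, hψ.natDegree_pow, hψd]

theorem degree_sum_mul_pow_lt [Nontrivial R] {φ : R[X]} (hφ : φ.Monic) {a : ℕ → R[X]}
    (ha : ∀ i, (a i).degree < φ.degree) (K : ℕ) :
    (∑ i ∈ range K, a i * φ ^ i).degree < (φ ^ K).degree := by
  induction K with
  | zero => simp
  | succ K ih =>
    rw [sum_range_succ, pow_succ', (hφ.pow K).degree_mul]
    refine (degree_add_le _ _).trans_lt (max_lt ?_ ?_)
    · exact ih.trans_le (le_add_of_nonneg_left (zero_le_degree_iff.2 hφ.ne_zero))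
    · rw [(hφ.pow K).degree_mul]
      exact WithBot.add_lt_add_right (degree_ne_bot.2 (hφ.pow K).ne_zero) (ha K)

theorem adicCoeff_eq_of_eq_sum [Nontrivial R] {F φ : R[X]} (hφ : φ.Monic) {a : ℕ → R[X]}
    (ha : ∀ i, (a i).degree < φ.degree) {K : ℕ} (hF : F = ∑ j ∈ range K, a j * φ ^ j) {i : ℕ}
    (hiK : i < K) : adicCoeff F φ i = a i := by
  subst hF
  obtain ⟨l, rfl⟩ : ∃ l, K = i + (l + 1) := ⟨K - i - 1, by omega⟩
  have hdiv : (∑ j ∈ range (i + (l + 1)), a j * φ ^ j) /ₘ φ ^ i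
      = a i + φ * ∑ j ∈ range l, a (i + (j + 1)) * φ ^ j := by
    refine (div_modByMonic_unique _ _ (hφ.pow i) ⟨?_, degree_sum_mul_pow_lt hφ ha i⟩).1
    rw [sum_range_add, sum_range_succ', add_zero, mul_add, add_comm (φ ^ i * a i),
      mul_comm (φ ^ i) (a i), mul_sum, mul_sum]
    refine congrArg (_ + ·) (congrArg (· + _) (sum_congr rfl fun j _ => by ring))
  rw [adicCoeff, hdiv]
  exact (div_modByMonic_unique _ _ hφ ⟨rfl, ha i⟩).2

section Monic

variable [Nontrivial R] {F ψ : R[X]}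

theorem degree_sub_pow_lt_of_monic (hF : F.Monic) (hFd : F.natDegree = (n + 1) * m)
    (hψ : ψ.Monic) (hψd : ψ.natDegree = m) : (F - ψ ^ (n + 1)).degree < ↑((n + 1) * m) := by
  have hdeg : F.degree = ↑((n + 1) * m) := by rw [degree_eq_natDegree hF.ne_zero, hFd]
  rw [← hdeg]
  refine degree_sub_lt_left ?_ hF.ne_zero (by rw [hF.leadingCoeff, (hψ.pow _).leadingCoeff])
  rw [hdeg, hψ.degree_pow_of_natDegree hψd]

theorem adicCoeff_eq_sub_pow_divByMonic (hF : F.Monic) (hFd : F.natDegree = (n + 1) * m)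
    (hψ : ψ.Monic) (hψd : ψ.natDegree = m) : adicCoeff F ψ n = (F - ψ ^ (n + 1)) /ₘ ψ ^ n := by
  set Q := (F - ψ ^ (n + 1)) /ₘ ψ ^ n
  have hQ : Q.degree < ψ.degree := by
    rw [degree_eq_natDegree hψ.ne_zero, hψd, degree_divByMonic_lt_iff (hψ.pow n),
      hψ.degree_pow_of_natDegree hψd, ← Nat.cast_add, ← Nat.succ_mul]
    exact degree_sub_pow_lt_of_monic hF hFd hψ hψd
  have hdiv : F /ₘ ψ ^ n = ψ + Q := by
    refine (div_modByMonic_unique _ ((F - ψ ^ (n + 1)) %ₘ ψ ^ n) (hψ.pow n)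
      ⟨?_, degree_modByMonic_lt _ (hψ.pow n)⟩).1
    linear_combination modByMonic_add_div (F - ψ ^ (n + 1)) (ψ ^ n)
  rw [adicCoeff, hdiv]
  exact (div_modByMonic_unique 1 Q hψ ⟨by ring, hQ⟩).2

theorem degree_adicCoeff_lt_iff (hF : F.Monic) (hFd : F.natDegree = (n + 1) * m)
    (hψ : ψ.Monic) (hψd : ψ.natDegree = m) (k : ℕ) :
    (adicCoeff F ψ n).degree < k ↔ (F - ψ ^ (n + 1)).degree < ↑(n * m + k) := by
  rw [adicCoeff_eq_sub_pow_divByMonic hF hFd hψ hψd, degree_divByMonic_lt_iff (hψ.pow n),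
    hψ.degree_pow_of_natDegree hψd, Nat.cast_add]

theorem adicCoeff_eq_zero_iff (hF : F.Monic) (hFd : F.natDegree = (n + 1) * m)
    (hψ : ψ.Monic) (hψd : ψ.natDegree = m) :
    adicCoeff F ψ n = 0 ↔ (F - ψ ^ (n + 1)).degree < ↑(n * m) := by
  simpa [Nat.WithBot.lt_zero_iff] using degree_adicCoeff_lt_iff hF hFd hψ hψd 0

end Monic

theorem natDegree_pow_succ_sub_pow_succ_le {x y : R[X]} (hx : x.natDegree ≤ m)
    (hy : y.natDegree ≤ m) (j : ℕ) :
    (x ^ (j + 1) - y ^ (j + 1)).natDegree ≤ j * m + (x - y).natDegree := by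
  rw [← geom_sum₂_mul]
  refine natDegree_mul_le_of_le (natDegree_sum_le_of_forall_le _ _ fun i hi => ?_) le_rfl
  obtain ⟨t, rfl⟩ := Nat.exists_eq_add_of_le (Nat.lt_succ_iff.1 (mem_range.1 hi))
  calc (x ^ i * y ^ (i + t + 1 - 1 - i)).natDegree ≤ i * m + (i + t + 1 - 1 - i) * m :=
        natDegree_mul_le_of_le (natDegree_pow_le_of_le _ hx) (natDegree_pow_le_of_le _ hy)
    _ = (i + t) * m := by rw [show i + t + 1 - 1 - i = t by omega, add_mul]

/-- `(ψ - b) ^ n * (ψ + n * b)` agrees with `ψ ^ (n + 1)` up to terms divisible by `b ^ 2`. -/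
theorem degree_sub_pow_mul_add_sub_pow_lt {ψ b : R[X]} {k : ℕ} (hψ : ψ.natDegree ≤ m)
    (hb : b.natDegree ≤ k) (hkm : k < m) (n : ℕ) :
    ((ψ - b) ^ n * (ψ + n * b) - ψ ^ (n + 1)).degree < ↑(n * m + k) := by
  set G : ℕ → R[X] := fun j => (ψ - b) ^ j * (ψ + j * b) - ψ ^ (j + 1)
  have hG : ∀ j, G (j + 1) = (ψ - b) * G j + b * ((ψ - b) ^ (j + 1) - ψ ^ (j + 1)) := by
    intro j
    simp only [G]
    push_cast
    ring
  have hψb : (ψ - b).natDegree ≤ m := (natDegree_sub_le_of_le hψ hb).trans (max_le le_rfl hkm.le)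
  have hcorr : ∀ j, (b * ((ψ - b) ^ (j + 1) - ψ ^ (j + 1))).natDegree ≤ k + (j * m + k) := by
    intro j
    refine natDegree_mul_le_of_le hb ((natDegree_pow_succ_sub_pow_succ_le hψb hψ j).trans ?_)
    rw [sub_sub_cancel_left, natDegree_neg]
    exact Nat.add_le_add_left hb _
  have hbound : ∀ j, (G (j + 1)).natDegree ≤ j * m + 2 * k := by
    intro j
    induction j with
    | zero =>
      rw [hG, show G 0 = 0 by simp [G], mul_zero, zero_add]
      exact (hcorr 0).trans (by omega)
    | succ j ih =>
      rw [hG]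
      refine natDegree_add_le_of_degree_le ((natDegree_mul_le_of_le hψb ih).trans ?_)
        ((hcorr _).trans ?_) <;> nlinarith
  cases n with
  | zero => simp
  | succ j =>
    refine degree_le_natDegree.trans_lt (WithBot.coe_lt_coe.2 ((hbound j).trans_lt ?_))
    nlinarith

section Tschirnhausen

variable [Nontrivial R] {F φ ψ : R[X]} {u : R}

theorem degree_C_mul_adicCoeff_lt (hψ : ψ.Monic) : (C u * adicCoeff F ψ n).degree < ψ.degree := by
  rw [← smul_eq_C_mul]
  exact (degree_smul_le u _).trans_lt (degree_modByMonic_lt _ hψ)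

theorem tschirnhausen_monic (hψ : ψ.Monic) : (tschirnhausen F u n ψ).Monic :=
  hψ.add_of_left (degree_C_mul_adicCoeff_lt hψ)

theorem natDegree_tschirnhausen (hψ : ψ.Monic) :
    (tschirnhausen F u n ψ).natDegree = ψ.natDegree :=
  natDegree_add_eq_left_of_degree_lt (degree_C_mul_adicCoeff_lt hψ)

theorem degree_sub_tschirnhausen_pow_lt (hF : F.Monic) (hFd : F.natDegree = (n + 1) * m)
    (hφ : φ.Monic) (hφd : φ.natDegree = m) (hu : ((n + 1 : ℕ) : R) * u = 1)
    (hc : adicCoeff F φ n ≠ 0) :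
    (F - tschirnhausen F u n φ ^ (n + 1)).degree < ↑(n * m + (adicCoeff F φ n).natDegree) := by
  set c := adicCoeff F φ n
  set b := C u * c
  set ψ := tschirnhausen F u n φ
  have hcb : c = (n + 1) * b := by
    rw [← mul_assoc, show (n + 1 : R[X]) = C ((n + 1 : ℕ) : R) by simp, ← C_mul, hu, C_1, one_mul]
  have hkm : c.natDegree < m := by
    rw [natDegree_lt_iff_degree_lt hc, ← hφd, ← degree_eq_natDegree hφ.ne_zero]
    exact degree_modByMonic_lt _ hφ
  have hφψ : φ = ψ - b := by simp [ψ, b, c, tschirnhausen]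
  have hF' : F = φ ^ n * (φ + c) + (F - φ ^ (n + 1)) %ₘ φ ^ n := by
    have := modByMonic_add_div (F - φ ^ (n + 1)) (φ ^ n)
    rw [← adicCoeff_eq_sub_pow_divByMonic hF hFd hφ hφd] at this
    linear_combination -this
  have hr : ((F - φ ^ (n + 1)) %ₘ φ ^ n).degree < ↑(n * m + c.natDegree) := by
    refine (degree_modByMonic_lt _ (hφ.pow n)).trans_le ?_
    rw [hφ.degree_pow_of_natDegree hφd]
    exact WithBot.coe_le_coe.2 (Nat.le_add_right _ _)
  have key : F - ψ ^ (n + 1) =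
      ((ψ - b) ^ n * (ψ + n * b) - ψ ^ (n + 1)) + (F - φ ^ (n + 1)) %ₘ φ ^ n := by
    nth_rewrite 1 [hF']
    rw [hφψ, hcb]
    ring
  rw [key]
  refine (degree_add_le _ _).trans_lt (max_lt ?_ hr)
  exact degree_sub_pow_mul_add_sub_pow_lt ((natDegree_tschirnhausen hφ).trans hφd).le
    (natDegree_C_mul_le u c) hkm n

theorem degree_adicCoeff_tschirnhausen_lt (hF : F.Monic) (hFd : F.natDegree = (n + 1) * m)
    (hφ : φ.Monic) (hφd : φ.natDegree = m) (hu : ((n + 1 : ℕ) : R) * u = 1)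
    (hc : adicCoeff F φ n ≠ 0) :
    (adicCoeff F (tschirnhausen F u n φ) n).degree < (adicCoeff F φ n).degree := by
  rw [degree_eq_natDegree hc, degree_adicCoeff_lt_iff hF hFd (tschirnhausen_monic hφ)
    ((natDegree_tschirnhausen hφ).trans hφd)]
  exact degree_sub_tschirnhausen_pow_lt hF hFd hφ hφd hu hc

theorem exists_iterate_tschirnhausen_le (hF : F.Monic) (hFd : F.natDegree = (n + 1) * m)
    (hu : ((n + 1 : ℕ) : R) * u = 1) (k : ℕ) (hφ : φ.Monic) (hφd : φ.natDegree = m)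
    (hk : (adicCoeff F φ n).degree < k) :
    ∃ j ≤ k, ((tschirnhausen F u n)^[j] φ).Monic ∧
      ((tschirnhausen F u n)^[j] φ).natDegree = m ∧
      (F - ((tschirnhausen F u n)^[j] φ) ^ (n + 1)).degree < ↑(n * m) := by
  induction k generalizing φ with
  | zero =>
    refine ⟨0, le_rfl, hφ, hφd, (adicCoeff_eq_zero_iff hF hFd hφ hφd).1 ?_⟩
    exact degree_eq_bot.1 (Nat.WithBot.lt_zero_iff.1 hk)
  | succ k ih =>
    by_cases hc : adicCoeff F φ n = 0
    · exact ⟨0, Nat.zero_le _, hφ, hφd, (adicCoeff_eq_zero_iff hF hFd hφ hφd).1 hc⟩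
    have hψk : (adicCoeff F (tschirnhausen F u n φ) n).degree < k := by
      refine (degree_adicCoeff_tschirnhausen_lt hF hFd hφ hφd hu hc).trans_le ?_
      rw [degree_eq_natDegree hc] at hk ⊢
      exact WithBot.coe_le_coe.2 (Nat.lt_succ_iff.1 (WithBot.coe_lt_coe.1 hk))
    obtain ⟨j, hjk, hj⟩ := ih (tschirnhausen_monic hφ) ((natDegree_tschirnhausen hφ).trans hφd) hψk
    exact ⟨j + 1, Nat.succ_le_succ hjk, by rwa [Function.iterate_succ_apply]⟩

end Tschirnhausen

end Polynomial

open Finset Polynomial in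
theorem tschirnhausen_decreases_and_reaches_approximate_root_general {A : Type*} [CommRing A]
    (F : Polynomial A) (d N : ℕ) (hF : F.Monic) (hdeg : F.natDegree = d)
    (hN : N ∣ d)
    (u : A) (hu : (N : A) * u = 1)
    (T : Polynomial A → Polynomial A)
    (hT : ∀ φ : Polynomial A, T φ = φ + Polynomial.C u * ((F /ₘ (φ ^ (N - 1))) %ₘ φ)) :
    (∀ φ : Polynomial A, φ.Monic → φ.natDegree = d / N →
      ∀ a a' : ℕ → Polynomial A,
        F = ∑ i ∈ range (N + 1), a i * φ ^ i →
        (∀ i, (a i).degree < ((d / N : ℕ) : WithBot ℕ)) →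
        F = ∑ i ∈ range (N + 1), a' i * (T φ) ^ i →
        (∀ i, (a' i).degree < ((d / N : ℕ) : WithBot ℕ)) →
        a (N - 1) ≠ 0 →
        (a' (N - 1)).degree < (a (N - 1)).degree) ∧
    (∀ φ : Polynomial A, φ.Monic → φ.natDegree = d / N →
      ∃ n ≤ d / N,
        (T^[n] φ).Monic ∧ (T^[n] φ).natDegree = d / N ∧
        (F - (T^[n] φ) ^ N).degree < ((d - d / N : ℕ) : WithBot ℕ)) := by
  rcases subsingleton_or_nontrivial A with _ | _
  · refine ⟨fun φ _ _ a _ _ _ _ _ ha => absurd (Subsingleton.elim _ _) ha,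
      fun φ hφ hφd => ⟨0, Nat.zero_le _, hφ, hφd, ?_⟩⟩
    rw [Subsingleton.elim (F - _) 0, degree_zero]
    exact WithBot.bot_lt_coe _
  obtain ⟨n, rfl⟩ : ∃ n, N = n + 1 := Nat.exists_eq_succ_of_ne_zero (by rintro rfl; simp at hu)
  obtain ⟨m, rfl⟩ := hN
  obtain rfl : T = tschirnhausen F u n := funext fun φ => by rw [hT, Nat.add_sub_cancel]; rfl
  rw [Nat.mul_div_cancel_left m n.succ_pos, Nat.add_sub_cancel,
    show (n + 1) * m - m = n * m by rw [add_mul, one_mul, Nat.add_sub_cancel]]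
  refine ⟨fun φ hφ hφd a a' ha ha_lt ha' ha'_lt hne => ?_, fun φ hφ hφd => ?_⟩
  · have hφdeg := (degree_eq_iff_natDegree_eq hφ.ne_zero).2 hφd
    have hψdeg := (degree_eq_iff_natDegree_eq (tschirnhausen_monic hφ).ne_zero).2
      ((natDegree_tschirnhausen (F := F) (u := u) (n := n) hφ).trans hφd)
    have hn : n < n + 1 + 1 := by omega
    have h := adicCoeff_eq_of_eq_sum hφ (hφdeg ▸ ha_lt) ha hn
    have h' := adicCoeff_eq_of_eq_sum (tschirnhausen_monic hφ) (hψdeg ▸ ha'_lt) ha' hn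
    rw [← h, ← h']
    exact degree_adicCoeff_tschirnhausen_lt hF hdeg hφ hφd hu (h ▸ hne)
  · exact exists_iterate_tschirnhausen_le hF hdeg hu m hφ hφd
      ((degree_eq_iff_natDegree_eq hφ.ne_zero).2 hφd ▸ degree_modByMonic_lt _ hφ)

open Finset Polynomial in
/-- The Tschirnhausen transform `τ_F(φ) = φ + a_{N-1}/N` strictly decreases
the degree of the coefficient of index `N - 1` in the adic expansion (when it is nonzero),
and after at most `d / N` iterations starting from any monic `φ` of degree `d / N` one
reaches the `N`-th approximate root of `F`.  Here the coefficient `a_{N-1}` of the `φ`-adic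
expansion is computed as `(F /ₘ φ ^ (N-1)) %ₘ φ`, and `u` is the inverse of `N` in `A`. -/
theorem tschirnhausen_decreases_and_reaches_approximate_root {A : Type*} [CommRing A]
    (F : Polynomial A) (d N : ℕ) (hF : F.Monic) (hdeg : F.natDegree = d)
    (hd : IsUnit (d : A)) (hN : N ∣ d) (hNpos : 0 < N)
    (u : A) (hu : (N : A) * u = 1)
    (T : Polynomial A → Polynomial A)
    (hT : ∀ φ : Polynomial A, T φ = φ + Polynomial.C u * ((F /ₘ (φ ^ (N - 1))) %ₘ φ)) :
    (∀ φ : Polynomial A, φ.Monic → φ.natDegree = d / N →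
      ∀ a a' : ℕ → Polynomial A,
        F = ∑ i ∈ range (N + 1), a i * φ ^ i →
        (∀ i, (a i).degree < ((d / N : ℕ) : WithBot ℕ)) →
        F = ∑ i ∈ range (N + 1), a' i * (T φ) ^ i →
        (∀ i, (a' i).degree < ((d / N : ℕ) : WithBot ℕ)) →
        a (N - 1) ≠ 0 →
        (a' (N - 1)).degree < (a (N - 1)).degree) ∧
    (∀ φ : Polynomial A, φ.Monic → φ.natDegree = d / N →
      ∃ n ≤ d / N,
        (T^[n] φ).Monic ∧ (T^[n] φ).natDegree = d / N ∧
        (F - (T^[n] φ) ^ N).degree < ((d - d / N : ℕ) : WithBot ℕ)) :=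
  tschirnhausen_decreases_and_reaches_approximate_root_general F d N hF hdeg hN u hu T hT
end

section
/- Let K be a field and F ∈ K[[x]][y] monic of degree d, and let G = y^d · F(x, 1/y) be the reciprocal polynomial, which satisfies G(x,0) = 1. If d is invertible in K and N divides d, then there is a unique power series S ∈ K[[x]][[y]] with S(0) = 1 and G = S^N, and the N-th approximate root ψ of F is the reciprocal polynomial of the truncation of S to degree d/N in y. -/
/-!
Since `N` is invertible and `G = F.reverse` has constant term `1`, the equation `T ^ N = G` has
the simple root `1` modulo `y`, so Hensel's lemma in the `y`-adically complete ring `K[[x]][[y]]`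
yields `S`. Two power series `a, b` with constant term `1` satisfy `a ^ N - b ^ N = (a - b) · u`
with `u` a unit (its constant term is `N`); this gives uniqueness, and shows that `a` and `b`
agree modulo `y ^ k` as soon as `a ^ N` and `b ^ N` do. For the approximate root `ψ` of degree
`e = d / N`, reversing `deg (F - ψ ^ N) < d - e` says that `G - (reflect e ψ) ^ N` is divisible
by `y ^ (e + 1)`, hence so is `S - reflect e ψ`: the truncation of `S` is `reflect e ψ`.
-/

open Polynomial PowerSeries

namespace PowerSeries

variable {R : Type*} [CommRing R]

theorem exists_pow_eq_of_constantCoeff_eq_one {N : ℕ} (hN₀ : N ≠ 0) (hN : IsUnit (N : R))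
    {g : R⟦X⟧} (hg : constantCoeff g = 1) :
    ∃ S : R⟦X⟧, constantCoeff S = 1 ∧ S ^ N = g := by
  have hNX : IsUnit (N : R⟦X⟧) := map_natCast (C (R := R)) N ▸ hN.map C
  obtain ⟨S, hroot, hS⟩ := HenselianRing.is_henselian (I := Ideal.span {(X : R⟦X⟧)})
    (Polynomial.X ^ N - Polynomial.C g) (monic_X_pow_sub_C g hN₀) 1
    (by simp [Ideal.mem_span_singleton, X_dvd_iff, hg])
    (by simpa [derivative_X_pow] using hNX.map (Ideal.Quotient.mk (Ideal.span {(X : R⟦X⟧)})))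
  rw [Ideal.mem_span_singleton, X_dvd_iff, map_sub, sub_eq_zero, map_one] at hS
  exact ⟨S, hS, by simpa [sub_eq_zero] using hroot⟩

theorem associated_sub_pow_sub_pow {N : ℕ} (hN : IsUnit (N : R)) {a b : R⟦X⟧}
    (ha : constantCoeff a = 1) (hb : constantCoeff b = 1) :
    Associated (a - b) (a ^ N - b ^ N) := by
  have hu : IsUnit (∑ i ∈ Finset.range N, a ^ i * b ^ (N - 1 - i)) := by
    rw [isUnit_iff_constantCoeff]
    simpa [map_sum, ha, hb] using hN
  exact ⟨hu.unit, by rw [IsUnit.unit_spec, mul_comm, geom_sum₂_mul]⟩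

theorem eq_of_pow_eq_pow {N : ℕ} (hN : IsUnit (N : R)) {a b : R⟦X⟧}
    (ha : constantCoeff a = 1) (hb : constantCoeff b = 1) (h : a ^ N = b ^ N) : a = b :=
  sub_eq_zero.1 <| (associated_sub_pow_sub_pow hN ha hb).eq_zero_iff.2 (sub_eq_zero.2 h)

theorem trunc_eq_trunc_of_X_pow_dvd_sub {n : ℕ} {f g : R⟦X⟧} (h : X ^ n ∣ f - g) :
    trunc n f = trunc n g := by
  ext m
  simp only [coeff_trunc]
  split_ifs with hm
  · exact sub_eq_zero.1 (by simpa using X_pow_dvd_iff.1 h m hm)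
  · rfl

end PowerSeries

namespace Polynomial

section Semiring

variable {R : Type*} [Semiring R]

theorem reflect_pow {p : R[X]} {e : ℕ} (hp : p.natDegree ≤ e) (n : ℕ) :
    reflect (n * e) (p ^ n) = reflect e p ^ n := by
  induction n with
  | zero => simp [reflect_one]
  | succ n ih =>
    rw [pow_succ, Nat.succ_mul, reflect_mul _ _ (natDegree_pow_le.trans (by nlinarith)) hp, ih,
      pow_succ]

theorem X_pow_dvd_reflect_of_degree_lt {f : R[X]} {d m : ℕ} (hf : f.degree < (d - m : ℕ)) :
    (PowerSeries.X : R⟦X⟧) ^ (m + 1) ∣ reflect d f := by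
  rw [PowerSeries.X_pow_dvd_iff]
  intro i hi
  have hrev : d - m ≤ revAt d i := by
    rcases le_or_gt i d with hid | hdi
    · rw [revAt_le hid]; omega
    · rw [revAt_eq_self_of_lt hdi]; omega
  rw [coeff_coe, coeff_reflect]
  exact coeff_eq_zero_of_degree_lt (hf.trans_le (by exact_mod_cast hrev))

end Semiring

variable {R : Type*} [CommRing R]

theorem trunc_eq_reflect_of_degree_sub_pow_lt {N e : ℕ} (hN : IsUnit (N : R)) {F ψ : R[X]}
    (hFdeg : F.natDegree = N * e) (hψ : ψ.Monic) (hψdeg : ψ.natDegree = e)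
    (hFψ : (F - ψ ^ N).degree < ((N * e - e : ℕ) : WithBot ℕ)) {S : R⟦X⟧}
    (hS : PowerSeries.constantCoeff S = 1) (hFS : (F.reverse : R⟦X⟧) = S ^ N) :
    trunc (e + 1) S = reflect e ψ := by
  have hP : PowerSeries.constantCoeff (reflect e ψ : R⟦X⟧) = 1 := by
    rw [← coeff_zero_eq_constantCoeff_apply, coeff_coe, coeff_reflect, revAt_zero, ← hψdeg]
    exact hψ
  have hdiff : S ^ N - (reflect e ψ : R⟦X⟧) ^ N = reflect (N * e) (F - ψ ^ N) := by
    rw [reflect_sub, reflect_pow hψdeg.le, ← hFdeg, ← reverse, coe_sub, coe_pow, hFS]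
  have hdvd : (PowerSeries.X : R⟦X⟧) ^ (e + 1) ∣ S - reflect e ψ :=
    (associated_sub_pow_sub_pow hN hS hP).dvd_iff_dvd_right.2
      (hdiff ▸ X_pow_dvd_reflect_of_degree_lt hFψ)
  rw [trunc_eq_trunc_of_X_pow_dvd_sub hdvd, trunc_coe_eq_self]
  exact natDegree_reflect_le.trans_lt (by omega)

end Polynomial

open Polynomial PowerSeries in
theorem approximate_root_via_power_series_root_general {K : Type*} [Field K]
    (F : Polynomial (PowerSeries K)) (d N : ℕ)
    (hF : F.Monic) (hdeg : F.natDegree = d)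
    (hd : IsUnit (d : K)) (hN : N ∣ d) (hNpos : 0 < N) :
    (∃! S : PowerSeries (PowerSeries K),
        PowerSeries.constantCoeff (R := PowerSeries K) S = 1 ∧
        (F.reverse : PowerSeries (PowerSeries K)) = S ^ N) ∧
    (∀ S : PowerSeries (PowerSeries K),
        PowerSeries.constantCoeff (R := PowerSeries K) S = 1 →
        (F.reverse : PowerSeries (PowerSeries K)) = S ^ N →
        ∀ ψ : Polynomial (PowerSeries K),
          ψ.Monic → ψ.natDegree = d / N →
          (F - ψ ^ N).degree < ((d - d / N : ℕ) : WithBot ℕ) →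
          ψ = Polynomial.reflect (d / N) (PowerSeries.trunc (d / N + 1) S)) := by
  have hNA : IsUnit (N : K⟦X⟧) :=
    map_natCast (PowerSeries.C (R := K)) N ▸
      (isUnit_of_dvd_unit (Nat.cast_dvd_cast hN) hd).map PowerSeries.C
  have hG : constantCoeff (F.reverse : K⟦X⟧⟦X⟧) = 1 := by
    rw [← coeff_zero_eq_constantCoeff_apply, Polynomial.coeff_coe, coeff_zero_reverse]
    exact hF
  obtain ⟨S₀, hS₀, hS₀G⟩ := exists_pow_eq_of_constantCoeff_eq_one hNpos.ne' hNA hG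
  obtain ⟨e, rfl⟩ := hN
  rw [Nat.mul_div_cancel_left e hNpos]
  refine ⟨⟨S₀, ⟨hS₀, hS₀G.symm⟩, fun T hT =>
      eq_of_pow_eq_pow hNA hT.1 hS₀ (hT.2.symm.trans hS₀G.symm)⟩,
    fun S hS hSG ψ hψ hψdeg hFψ => ?_⟩
  rw [trunc_eq_reflect_of_degree_sub_pow_lt hNA hdeg hψ hψdeg hFψ hS hSG, reflect_reflect]

open Polynomial PowerSeries in
/-- For monic `F ∈ K[[x]][y]` of degree `d`, with `d` invertible in `K` and
`N ∣ d`, the reciprocal polynomial `G = y^d F(x, 1/y)` (which has constant coefficient `1`)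
admits a unique `N`-th root `S ∈ K[[x]][[y]]` with constant term `1`, and the `N`-th
approximate root `ψ` of `F` is the reciprocal polynomial (reflection in degree `d/N`)
of the truncation of `S` in degrees `≤ d / N`. -/
theorem approximate_root_via_power_series_root {K : Type*} [Field K]
    (F : Polynomial (PowerSeries K)) (d N : ℕ)
    (hF : F.Monic) (hdeg : F.natDegree = d) (hdpos : 0 < d)
    (hd : IsUnit (d : K)) (hN : N ∣ d) (hNpos : 0 < N) :
    (∃! S : PowerSeries (PowerSeries K),
        PowerSeries.constantCoeff (R := PowerSeries K) S = 1 ∧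
        (F.reverse : PowerSeries (PowerSeries K)) = S ^ N) ∧
    (∀ S : PowerSeries (PowerSeries K),
        PowerSeries.constantCoeff (R := PowerSeries K) S = 1 →
        (F.reverse : PowerSeries (PowerSeries K)) = S ^ N →
        ∀ ψ : Polynomial (PowerSeries K),
          ψ.Monic → ψ.natDegree = d / N →
          (F - ψ ^ N).degree < ((d - d / N : ℕ) : WithBot ℕ) →
          ψ = Polynomial.reflect (d / N) (PowerSeries.trunc (d / N + 1) S)) :=
  approximate_root_via_power_series_root_general F d N hF hdeg hd hN hNpos
end

section
/- Let K be a field and F ∈ K[[x]][y] a monic polynomial that is irreducible in K[[x]][y]. Then the Newton polygon of F is straight, i.e., the lower convex hull of the points (i, val(a_i)) for F = Σ_{i=0}^d a_i(x) y^i consists of a single edge (or a single point). -/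
/-!
Pass to the fraction field `K((x))`, which is complete for the `x`-adic norm `‖f‖ = 2 ^ (-val f)`;
by Gauss's lemma `F` stays irreducible there. Over a complete nonarchimedean field the spectral
norm is invariant under conjugation, so all roots of an irreducible monic `p = ∑ aᵢ yⁱ` of degree
`d` have the same norm `‖a₀‖ ^ (1 / d)`, which is then the spectral value
`max_{i < d} ‖aᵢ‖ ^ (1 / (d - i))`. Hence `‖aᵢ‖ ^ d ≤ ‖a₀‖ ^ (d - i)`, i.e.
`d * val aᵢ ≥ (d - i) * val a₀`: every point of the Newton diagram lies above the segment from
`(0, val a₀)` to `(d, 0)`. If `a₀ = 0` the same bound kills every `aᵢ` with `i < d`.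
-/

open Polynomial
open scoped LaurentSeries PowerSeries WithZero Valued

theorem Real.pow_le_pow_of_rpow_inv_le {x y : ℝ} (hx : 0 ≤ x) (hy : 0 ≤ y) {m n : ℕ}
    (hm : m ≠ 0) (hn : n ≠ 0) (h : x ^ (m⁻¹ : ℝ) ≤ y ^ (n⁻¹ : ℝ)) : x ^ n ≤ y ^ m := by
  have := pow_le_pow_left₀ (by positivity) h (m * n)
  rwa [pow_mul, Real.rpow_inv_natCast_pow hx hm, mul_comm, pow_mul,
    Real.rpow_inv_natCast_pow hy hn] at this

section SpectralValue

variable {k : Type*} [NontriviallyNormedField k] [CompleteSpace k] [IsUltrametricDist k]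

theorem Polynomial.Monic.spectralValue_eq_norm_coeff_zero_rpow {p : k[X]} (hp : p.Monic)
    (hirr : Irreducible p) : spectralValue p = ‖p.coeff 0‖ ^ (1 / p.natDegree : ℝ) := by
  have := Fact.mk hirr
  have : Module.Finite k (AdjoinRoot p) := (AdjoinRoot.powerBasis hirr.ne_zero).finite
  have hmin : minpoly k (AdjoinRoot.root p) = p := by
    rw [AdjoinRoot.minpoly_root hirr.ne_zero, hp.leadingCoeff, inv_one, C_1, mul_one]
  simpa only [spectralNorm, hmin] using
    spectralNorm.spectralNorm_eq_norm_coeff_zero_rpow k (AdjoinRoot p) (AdjoinRoot.root p)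

theorem Polynomial.Monic.norm_coeff_pow_natDegree_le_of_irreducible {p : k[X]} (hp : p.Monic)
    (hirr : Irreducible p) (i : ℕ) :
    ‖p.coeff i‖ ^ p.natDegree ≤ ‖p.coeff 0‖ ^ (p.natDegree - i) := by
  rcases lt_or_ge i p.natDegree with hi | hi
  · have hterm : spectralValueTerms p i ≤ spectralValue p :=
      le_ciSup (spectralValueTerms_bddAbove p) i
    rw [spectralValueTerms_of_lt_natDegree p hi, hp.spectralValue_eq_norm_coeff_zero_rpow hirr,
      ← Nat.cast_sub hi.le, one_div, one_div] at hterm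
    exact Real.pow_le_pow_of_rpow_inv_le (norm_nonneg _) (norm_nonneg _) (by omega)
      (by omega) hterm
  · rw [Nat.sub_eq_zero_of_le hi, pow_zero]
    refine pow_le_one₀ (norm_nonneg _) ?_
    rcases hi.eq_or_lt with rfl | hlt
    · rw [hp.coeff_natDegree, norm_one]
    · rw [coeff_eq_zero_of_natDegree_lt hlt, norm_zero]
      exact zero_le_one

end SpectralValue

namespace LaurentSeries

variable {K : Type*} [Field K]

noncomputable instance : (Valued.v : Valuation K⸨X⸩ ℤᵐ⁰).RankOne where
  hom' := (WithZeroMulInt.toNNReal two_ne_zero).comp MonoidWithZeroHom.ValueGroup₀.embedding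
  strictMono' := (WithZeroMulInt.toNNReal_strictMono one_lt_two).comp
    MonoidWithZeroHom.ValueGroup₀.embedding_strictMono
  exists_val_nontrivial := ⟨HahnSeries.single 1 1, by simp [valuation_single_zpow]⟩

theorem valuation_coe_le_exp_neg_iff (f : K⟦X⟧) (n : ℕ) :
    Valued.v (f : K⸨X⸩) ≤ WithZero.exp (-n : ℤ) ↔ (n : ℕ∞) ≤ f.order := by
  rw [intValuation_le_iff_coeff_lt_eq_zero]
  exact ⟨f.nat_le_order n, fun h i hi => PowerSeries.coeff_of_lt_order i
    (lt_of_lt_of_le (by exact_mod_cast hi) h)⟩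

theorem order_le_order_of_norm_coe_le {f g : K⟦X⟧} (h : ‖(f : K⸨X⸩)‖ ≤ ‖(g : K⸨X⸩)‖) :
    g.order ≤ f.order := by
  rw [Valued.toNormedField.norm_le_iff] at h
  refine ENat.forall_natCast_le_iff_le.mp fun n hn => ?_
  rw [← valuation_coe_le_exp_neg_iff] at hn ⊢
  exact h.trans hn

end LaurentSeries

open LaurentSeries in
theorem Polynomial.Monic.natDegree_sub_mul_order_coeff_zero_le_of_irreducible {K : Type*}
    [Field K] {F : K⟦X⟧[X]} (hF : F.Monic) (hirr : Irreducible F) (i : ℕ) :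
    ((F.natDegree - i : ℕ) : ℕ∞) * (F.coeff 0).order ≤ F.natDegree * (F.coeff i).order := by
  have hG := (hF.map (algebraMap K⟦X⟧ K⸨X⸩)).norm_coeff_pow_natDegree_le_of_irreducible
    (hF.irreducible_iff_irreducible_map_fraction_map.mp hirr) i
  rw [hF.natDegree_map, coeff_map, coeff_map, coe_algebraMap, ← norm_pow, ← norm_pow,
    ← map_pow, ← map_pow] at hG
  simpa only [PowerSeries.order_pow, nsmul_eq_mul] using order_le_order_of_norm_coe_le hG

/-- If `F ∈ K[[x]][y]` is monic and irreducible, then its Newton polygon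
is straight: writing `d = deg F` and letting `i₀` be the smallest index with nonzero
coefficient, every point `(i, val (a_i))` of the Newton diagram lies on or above the
segment joining `(i₀, val (a_{i₀}))` and `(d, 0)`, i.e.
`(d - i₀) * val (a_i) ≥ (d - i) * val (a_{i₀})` whenever `a_i ≠ 0`. -/
theorem newton_polygon_straight_of_irreducible {K : Type*} [Field K]
    (F : Polynomial (PowerSeries K)) (hF : F.Monic) (hirr : Irreducible F)
    (d : ℕ) (hdeg : F.natDegree = d)
    (i₀ : ℕ) (hi₀ : F.coeff i₀ ≠ 0) (hmin : ∀ j < i₀, F.coeff j = 0) :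
    ∀ i, F.coeff i ≠ 0 →
      ((d - i : ℕ) : ℕ∞) * (F.coeff i₀).order ≤
        ((d - i₀ : ℕ) : ℕ∞) * (F.coeff i).order := by
  intro i hi
  have hbound := hdeg ▸ hF.natDegree_sub_mul_order_coeff_zero_le_of_irreducible hirr
  rcases Nat.eq_zero_or_pos i₀ with rfl | hpos
  · simpa using hbound i
  have hrhs_ne_top : ∀ j, F.coeff j ≠ 0 → (d : ℕ∞) * (F.coeff j).order ≠ ⊤ := fun j hj =>
    WithTop.mul_ne_top (ENat.natCast_ne_top d) (PowerSeries.order_eq_top.not.mpr hj)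
  have hsub_eq_zero : ∀ j, F.coeff j ≠ 0 → d - j = 0 := by
    intro j hj
    by_contra hne
    have hj_bound := hbound j
    rw [hmin 0 hpos, PowerSeries.order_zero, ENat.mul_top (by exact_mod_cast hne),
      top_le_iff] at hj_bound
    exact hrhs_ne_top j hj hj_bound
  simp [hsub_eq_zero i hi, hsub_eq_zero i₀ hi₀]
end

section
/- Let e_0 = 1 and e_k = q_1 ⋯ q_k for positive integers q_1, …, q_g with each q_k ≥ 1, and let m_1, …, m_g be nonnegative integers with gcd(q_k, m_k) = 1 for each k. Define ê_k = e_g / e_k, B_0 = e_g, B_k = m_1 ê_1 + ⋯ + m_k ê_k, and M_k = m_1 ê_0 ê_1 + ⋯ + m_k ê_{k−1} ê_k. Then for every 1 ≤ k ≤ g, M_k = Σ_{i=1}^{k} (ê_{i−1} − ê_i) B_i + ê_k B_k. -/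
open Finset in
/-- With `e_k = q_1 ⋯ q_k`, `ê_k = e_g / e_k`, `B_0 = e_g`,
`B_k = Σ_{i=1}^{k} m_i ê_i`, and `M_k = Σ_{i=1}^{k} m_i ê_{i-1} ê_i`, one has
`M_k = Σ_{i=1}^{k} (ê_{i-1} - ê_i) B_i + ê_k B_k` for every `1 ≤ k ≤ g`. -/
theorem intersection_numbers_formula (g : ℕ) (q m : ℕ → ℕ)
    (hq : ∀ k, 1 ≤ q k) (hcop : ∀ k, Nat.Coprime (q k) (m k))
    (e ehat B M : ℕ → ℕ)
    (he : ∀ k, e k = ∏ i ∈ Icc 1 k, q i)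
    (hehat : ∀ k, ehat k = e g / e k)
    (hB0 : B 0 = e g)
    (hB : ∀ k, 1 ≤ k → B k = ∑ i ∈ Icc 1 k, m i * ehat i)
    (hM : ∀ k, 1 ≤ k → M k = ∑ i ∈ Icc 1 k, m i * ehat (i - 1) * ehat i) :
    ∀ k, 1 ≤ k → k ≤ g →
      M k = (∑ i ∈ Icc 1 k, (ehat (i - 1) - ehat i) * B i) + ehat k * B k := by
  have hepos : ∀ k, 0 < e k := by
    intro k; rw [he]; exact Finset.prod_pos (fun i _ => hq i)
  have hdvd : ∀ j, j ≤ g → e j ∣ e g := by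
    intro j hj
    rw [he, he]
    exact Finset.prod_dvd_prod_of_subset _ _ _ (Finset.Icc_subset_Icc_right hj)
  have hstep : ∀ j, 1 ≤ j → j ≤ g → ehat (j - 1) = q j * ehat j := by
    intro j h1 hjg
    obtain ⟨j', rfl⟩ : ∃ j', j = j' + 1 := ⟨j - 1, by omega⟩
    have hej : e (j' + 1) = e j' * q (j' + 1) := by
      rw [he, he, Finset.prod_Icc_succ_top (by omega : 1 ≤ j' + 1)]
    have heg : e g = e j' * (q (j' + 1) * ehat (j' + 1)) := by
      have : e g = e (j' + 1) * ehat (j' + 1) := by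
        rw [hehat, Nat.mul_div_cancel' (hdvd _ hjg)]
      rw [this, hej]; ring
    simp only [Nat.add_sub_cancel]
    rw [hehat, heg, Nat.mul_div_cancel_left _ (hepos j')]
  have hle : ∀ j, 1 ≤ j → j ≤ g → ehat j ≤ ehat (j - 1) := by
    intro j h1 hjg
    rw [hstep j h1 hjg]
    exact Nat.le_mul_of_pos_left _ (hq j)
  intro k hk1 hkg
  induction k with
  | zero => omega
  | succ n ih =>
    rcases Nat.lt_or_ge n 1 with hn | hn
    · -- base case k = 1
      interval_cases n
      have h10 : ehat 1 ≤ ehat 0 := hle 1 le_rfl hkg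
      rw [hM 1 le_rfl]
      simp only [Finset.Icc_self, Finset.sum_singleton, Nat.sub_self, Nat.zero_add]
      have key : (ehat 0 - ehat 1) * B 1 + ehat 1 * B 1 = ehat 0 * B 1 := by
        rw [← add_mul, Nat.sub_add_cancel h10]
      rw [key, hB 1 le_rfl]
      simp only [Finset.Icc_self, Finset.sum_singleton]
      ring
    · -- inductive step
      have hng : n ≤ g := by omega
      have ihn := ih hn hng
      have hMsucc : M (n + 1) = M n + m (n + 1) * ehat n * ehat (n + 1) := by
        rw [hM (n + 1) (by omega), Finset.sum_Icc_succ_top (by omega : 1 ≤ n + 1),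
          ← hM n hn]
        simp
      have hBsucc : B (n + 1) = B n + m (n + 1) * ehat (n + 1) := by
        rw [hB (n + 1) (by omega), Finset.sum_Icc_succ_top (by omega : 1 ≤ n + 1),
          ← hB n hn]
      have hlen : ehat (n + 1) ≤ ehat n := by
        have := hle (n + 1) (by omega) hkg
        simpa using this
      rw [Finset.sum_Icc_succ_top (by omega : 1 ≤ n + 1)]
      simp only [Nat.add_sub_cancel]
      have key : (ehat n - ehat (n + 1)) * B (n + 1) + ehat (n + 1) * B (n + 1)
          = ehat n * B n + m (n + 1) * ehat n * ehat (n + 1) := by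
        rw [← add_mul, Nat.sub_add_cancel hlen, hBsucc]
        ring
      rw [hMsucc, ihn, add_assoc, add_assoc, key]
end

section
/- With the notation e_k = q_1⋯q_k, ê_k = e_g/e_k, B_0 = e_g and B_k = Σ_{i≤k} m_i ê_i (where gcd(q_i, m_i) = 1 and q_i ≥ 1, m_i ≥ 0), one has gcd(B_0, B_1, …, B_k) = ê_k for every 0 ≤ k ≤ g. In particular gcd(B_0, …, B_g) = 1. -/
/-!
Write `P k = q_{k+1} ⋯ q_g`, so that `ê_k = P k`. Pulling `P k` out of `B_k` leaves
`C_k = Σ_{i ≤ k} m_i q_{i+1} ⋯ q_k`, which satisfies `C_k = C_{k-1} q_k + m_k` and is therefore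
coprime to `q_k`. Since `P (k-1) = q_k P k`, adding `B_k = C_k P k` to a gcd equal to `P (k-1)`
cuts it down to exactly `P k`.
-/

open Finset

namespace CharacteristicExponents

variable (q m : ℕ → ℕ)

theorem prod_Ioc_div_prod_Ioc {a b c : ℕ} (hab : a ≤ b) (hbc : b ≤ c)
    (hpos : 0 < ∏ i ∈ Ioc a b, q i) :
    (∏ i ∈ Ioc a c, q i) / ∏ i ∈ Ioc a b, q i = ∏ i ∈ Ioc b c, q i := by
  rw [← prod_Ioc_consecutive q hab hbc, Nat.mul_div_cancel_left _ hpos]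

theorem sum_mul_prod_Ioc_eq_mul {k g : ℕ} (hkg : k ≤ g) :
    ∑ i ∈ Icc 1 k, m i * ∏ j ∈ Ioc i g, q j =
      (∑ i ∈ Icc 1 k, m i * ∏ j ∈ Ioc i k, q j) * ∏ j ∈ Ioc k g, q j := by
  rw [sum_mul]
  refine sum_congr rfl fun i hi => ?_
  rw [mul_assoc, prod_Ioc_consecutive q (mem_Icc.mp hi).2 hkg]

theorem sum_mul_prod_Ioc_succ (n : ℕ) :
    ∑ i ∈ Icc 1 (n + 1), m i * ∏ j ∈ Ioc i (n + 1), q j =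
      (∑ i ∈ Icc 1 n, m i * ∏ j ∈ Ioc i n, q j) * q (n + 1) + m (n + 1) := by
  rw [sum_Icc_succ_top (Nat.le_add_left 1 n), Ioc_self, prod_empty, mul_one, sum_mul]
  congr 1
  refine sum_congr rfl fun i hi => ?_
  rw [prod_Ioc_succ_top (mem_Icc.mp hi).2, mul_assoc]

theorem coprime_sum_mul_prod_Ioc {k : ℕ} (hk : 1 ≤ k) (hcop : Nat.Coprime (q k) (m k)) :
    Nat.Coprime (∑ i ∈ Icc 1 k, m i * ∏ j ∈ Ioc i k, q j) (q k) := by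
  obtain ⟨n, rfl⟩ := Nat.exists_eq_add_of_le' hk
  rw [sum_mul_prod_Ioc_succ, add_comm]
  exact (Nat.coprime_add_mul_right_left _ _ _).mpr hcop.symm

theorem gcd_range_eq_prod_Ioc (g : ℕ) (hcop : ∀ k, Nat.Coprime (q k) (m k)) (B : ℕ → ℕ)
    (hB0 : B 0 = ∏ i ∈ Ioc 0 g, q i)
    (hB : ∀ k, 1 ≤ k → k ≤ g → B k = ∑ i ∈ Icc 1 k, m i * ∏ j ∈ Ioc i g, q j) :
    ∀ k ≤ g, (range (k + 1)).gcd B = ∏ i ∈ Ioc k g, q i := by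
  intro k
  induction k with
  | zero => intro _; simp [hB0]
  | succ k ih =>
    intro hk
    have hBk : B (k + 1) = (∑ i ∈ Icc 1 (k + 1), m i * ∏ j ∈ Ioc i (k + 1), q j) *
        ∏ j ∈ Ioc (k + 1) g, q j := by
      rw [hB (k + 1) (Nat.le_add_left 1 k) hk, sum_mul_prod_Ioc_eq_mul q m hk]
    have hPk : ∏ i ∈ Ioc k g, q i = q (k + 1) * ∏ i ∈ Ioc (k + 1) g, q i := by
      rw [← prod_Ioc_consecutive q (Nat.le_succ k) hk, Nat.Ioc_succ_singleton, prod_singleton]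
    have hC := coprime_sum_mul_prod_Ioc q m (Nat.le_add_left 1 k) (hcop (k + 1))
    rw [range_add_one, gcd_insert, ih (Nat.le_of_succ_le hk), hBk, hPk]
    exact (Nat.gcd_mul_right _ _ _).trans (by rw [hC.gcd_eq_one, one_mul])

end CharacteristicExponents

open Finset in
/-- With `e_k = q_1 ⋯ q_k`, `ê_k = e_g / e_k`, `B_0 = e_g` and
`B_k = Σ_{i ≤ k} m_i ê_i` (where `gcd (q_i) (m_i) = 1`), one has
`gcd (B_0, …, B_k) = ê_k` for every `0 ≤ k ≤ g`; in particular `gcd (B_0, …, B_g) = 1`. -/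
theorem gcd_characteristic_exponents (g : ℕ) (q m : ℕ → ℕ)
    (hq : ∀ k, 1 ≤ q k) (hcop : ∀ k, Nat.Coprime (q k) (m k))
    (e ehat B : ℕ → ℕ)
    (he : ∀ k, e k = ∏ i ∈ Icc 1 k, q i)
    (hehat : ∀ k, ehat k = e g / e k)
    (hB0 : B 0 = e g)
    (hB : ∀ k, 1 ≤ k → B k = ∑ i ∈ Icc 1 k, m i * ehat i) :
    (∀ k ≤ g, (Finset.range (k + 1)).gcd B = ehat k) ∧
      (Finset.range (g + 1)).gcd B = 1 := by
  have hIcc : ∀ k, Icc 1 k = Ioc 0 k := Finset.Icc_add_one_left_eq_Ioc 0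
  have hehat_eq : ∀ k ≤ g, ehat k = ∏ i ∈ Ioc k g, q i := fun k hk => by
    rw [hehat, he, he, hIcc, hIcc]
    exact CharacteristicExponents.prod_Ioc_div_prod_Ioc q (Nat.zero_le k) hk
      (prod_pos fun i _ => hq i)
  have hgcd := CharacteristicExponents.gcd_range_eq_prod_Ioc q m g hcop B
    (by rw [hB0, he, hIcc])
    (fun k hk hkg => by
      rw [hB k hk]
      exact sum_congr rfl fun i hi => by rw [hehat_eq i ((mem_Icc.mp hi).2.trans hkg)])
  refine ⟨fun k hk => (hgcd k hk).trans (hehat_eq k hk).symm, ?_⟩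
  simp [hgcd g le_rfl]
end

section
/- Let F ∈ \overline{K}[[x]][y] be irreducible of degree e with Puiseux parametrization (T^e, S(T)), S(T) = Σ_i a_i T^i, and let y_1, …, y_e ∈ \overline{K}[[x^{1/e}]] be the e Puiseux series roots S(ω x^{1/e}) as ω runs over the e-th roots of unity (char K = 0 or > e). Fix a root y_a. Then the multiset ( val(y_a − y_b) : b ≠ a ) consists of the values β_k/e, each repeated E_{k−1} − E_k times, for k = 1, …, G, where (β_0 = e; β_1, …, β_G) are the characteristic exponents of F and E_k = gcd(β_0,…,β_k). -/
/-!
Writing the roots as `S_ω = Σ aᵢ ωⁱ Tⁱ` and `ω = ω₀ ζ`, the difference `S_{ω₀} − S_{ω₀ζ}` has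
coefficients `aᵢ ω₀ⁱ (1 − ζⁱ)`, so its order is the first `i` with `aᵢ ≠ 0` and `ζⁱ ≠ 1`.
The groups of `E_j`-th roots of unity form a chain `μ_{E₀} ⊇ μ_{E₁} ⊇ ⋯ ⊇ μ_{E_G} = {1}`, and for
`ζ ∈ μ_{E_{j-1}} \ μ_{E_j}` every exponent `i < β_j` with `aᵢ ≠ 0` is a multiple of `E_{j-1}`,
while `ζ^{β_j} ≠ 1` because `gcd(β_j, E_{j-1}) = E_j`. Hence the difference has order `β_j` on
exactly `E_{j-1} − E_j` of the roots `ζ`.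
-/

open Polynomial PowerSeries Finset

theorem Multiset.tsub_eq_bind_Icc_of_antitone {α : Type*} [DecidableEq α] {μ : ℕ → Multiset α}
    (hμ : Antitone μ) (n : ℕ) :
    μ 0 - μ n = (Finset.Icc 1 n).val.bind fun j => μ (j - 1) - μ j := by
  induction n with
  | zero => simp
  | succ n ih =>
    rw [← insert_Icc_right_eq_Icc_add_one (by omega), insert_val_of_notMem (by simp),
      Multiset.cons_bind, ← ih, add_tsub_cancel_right, add_comm (μ n - _)]
    exact (tsub_add_tsub_cancel (hμ n.zero_le) (hμ n.le_succ)).symm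

def prefixGcd (β : ℕ → ℕ) (j : ℕ) : ℕ := (range (j + 1)).gcd β

theorem prefixGcd_zero (β : ℕ → ℕ) : prefixGcd β 0 = β 0 := by
  simp [prefixGcd]

theorem prefixGcd_of_pos (β : ℕ → ℕ) {j : ℕ} (hj : 0 < j) :
    prefixGcd β j = Nat.gcd (β j) (prefixGcd β (j - 1)) := by
  obtain ⟨i, rfl⟩ : ∃ i, j = i + 1 := ⟨j - 1, by omega⟩
  rw [prefixGcd, range_add_one, gcd_insert, prefixGcd]
  rfl

theorem prefixGcd_dvd_of_le (β : ℕ → ℕ) {i j : ℕ} (hij : i ≤ j) : prefixGcd β j ∣ prefixGcd β i :=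
  Finset.dvd_gcd fun _ hb => Finset.gcd_dvd (range_subset_range.2 (by omega) hb)

theorem natCast_ne_zero_of_forall_charP {k : Type*} [Field k] {e m : ℕ}
    (hchar : ∀ p : ℕ, CharP k p → p = 0 ∨ e < p) (hm : 0 < m) (hme : m ≤ e) : (m : k) ≠ 0 := by
  obtain ⟨p, hp⟩ := CharP.exists k
  rw [ne_eq, CharP.cast_eq_zero_iff k p]
  rcases hchar p hp with rfl | hpe
  · simpa using hm.ne'
  · exact fun hpm => (Nat.le_of_dvd hm hpm).not_gt (by omega)

section RootsOfUnity

theorem nthRoots_one_nodup_of_natCast_ne_zero {k : Type*} [Field k] [IsAlgClosed k] {n : ℕ}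
    (hn : (n : k) ≠ 0) : (nthRoots n (1 : k)).Nodup :=
  have : NeZero (n : k) := ⟨hn⟩
  (HasEnoughRootsOfUnity.exists_primitiveRoot k n).choose_spec.nthRoots_one_nodup

theorem card_nthRoots_one_of_natCast_ne_zero {k : Type*} [Field k] [IsAlgClosed k] {n : ℕ}
    (hn : (n : k) ≠ 0) : Multiset.card (nthRoots n (1 : k)) = n :=
  have : NeZero (n : k) := ⟨hn⟩
  (HasEnoughRootsOfUnity.exists_primitiveRoot k n).choose_spec.card_nthRoots_one

variable {R : Type*} [CommRing R] [IsDomain R]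

theorem nthRoots_one_le_of_dvd {m n : ℕ} (hmn : m ∣ n) (hn : 0 < n)
    (hm : (nthRoots m (1 : R)).Nodup) : nthRoots m (1 : R) ≤ nthRoots n 1 := by
  have hm0 : 0 < m := Nat.pos_of_dvd_of_pos hmn hn
  rw [Multiset.le_iff_subset hm]
  intro x hx
  obtain ⟨c, rfl⟩ := hmn
  rw [mem_nthRoots hn, pow_mul, (mem_nthRoots hm0).1 hx, one_pow]

theorem nthRoots_one_erase_eq_map_mul [DecidableEq R] {n : ℕ} (hn : 0 < n)
    (hnd : (nthRoots n (1 : R)).Nodup) {ω : R} (hω : ω ^ n = 1) :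
    (nthRoots n (1 : R)).erase ω = ((nthRoots n 1).erase 1).map (ω * ·) := by
  have hinj : Function.Injective (ω * ·) :=
    mul_right_injective₀ (IsUnit.of_pow_eq_one hω hn.ne').ne_zero
  have hmap : (nthRoots n (1 : R)).map (ω * ·) = nthRoots n 1 := by
    refine Multiset.eq_of_le_of_card_le ?_ (by simp)
    rw [Multiset.le_iff_subset (hnd.map hinj)]
    intro x hx
    obtain ⟨ζ, hζ, rfl⟩ := Multiset.mem_map.1 hx
    rw [mem_nthRoots hn] at hζ ⊢
    rw [mul_pow, hω, hζ, one_mul]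
  rw [Multiset.map_erase _ hinj, hmap, mul_one]

end RootsOfUnity

section TwistedSeries

variable {k : Type*} [Field k] {a : ℕ → k} {ω ζ : k}

theorem order_twist_sub_eq (hω : ω ≠ 0) {b : ℕ} (hb : a b ≠ 0) (hζb : ζ ^ b ≠ 1)
    (hlow : ∀ i < b, a i ≠ 0 → ζ ^ i = 1) :
    (PowerSeries.mk (fun i => a i * ω ^ i) - PowerSeries.mk (fun i => a i * (ω * ζ) ^ i)).order
      = b := by
  have hcoeff : ∀ n, coeff n (PowerSeries.mk (fun i => a i * ω ^ i)
      - PowerSeries.mk (fun i => a i * (ω * ζ) ^ i)) = a n * ω ^ n * (1 - ζ ^ n) := by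
    intro n
    rw [map_sub, coeff_mk, coeff_mk, mul_pow]
    ring
  rw [order_eq_nat, hcoeff]
  refine ⟨mul_ne_zero (mul_ne_zero hb (pow_ne_zero _ hω)) (sub_ne_zero.2 hζb.symm), ?_⟩
  intro i hi
  rw [hcoeff]
  by_cases hai : a i = 0
  · rw [hai, zero_mul, zero_mul]
  · rw [hlow i hi hai, sub_self, mul_zero]

theorem exists_ne_zero_not_dvd_of_primitive {e d : ℕ}
    (hprim : ∀ q : ℕ, q ∣ e → (∀ i, a i ≠ 0 → q ∣ i) → q = 1) (hd : d ∣ e) (hd1 : d ≠ 1) :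
    {i | a i ≠ 0 ∧ ¬ d ∣ i}.Nonempty := by
  by_contra h
  refine hd1 (hprim d hd fun i hi => ?_)
  by_contra hdi
  exact h ⟨i, hi, hdi⟩

theorem order_twist_sub_eq_sInf {d : ℕ} (hω : ω ≠ 0) (hne : {i | a i ≠ 0 ∧ ¬ d ∣ i}.Nonempty)
    (hζd : ζ ^ d = 1) (hζ : ζ ^ Nat.gcd (sInf {i | a i ≠ 0 ∧ ¬ d ∣ i}) d ≠ 1) :
    (PowerSeries.mk (fun i => a i * ω ^ i) - PowerSeries.mk (fun i => a i * (ω * ζ) ^ i)).order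
      = (sInf {i | a i ≠ 0 ∧ ¬ d ∣ i} : ℕ) := by
  refine order_twist_sub_eq hω (Nat.sInf_mem hne).1 (fun h => hζ (pow_gcd_eq_one.2 ⟨h, hζd⟩)) ?_
  intro i hi hai
  obtain ⟨c, rfl⟩ : d ∣ i := by_contra fun h => Nat.notMem_of_lt_sInf hi ⟨hai, h⟩
  rw [pow_mul, hζd, one_pow]

end TwistedSeries

open Polynomial PowerSeries Finset in
theorem multiset_of_root_differences_general {k : Type*} [Field k] [IsAlgClosed k] [DecidableEq k]
    (e : ℕ) (hepos : 0 < e)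
    (hchar : ∀ p : ℕ, CharP k p → p = 0 ∨ e < p)
    (a : ℕ → k)
    (hprim : ∀ q : ℕ, q ∣ e → (∀ i, a i ≠ 0 → q ∣ i) → q = 1)
    (β E : ℕ → ℕ) (Gn : ℕ)
    (hβ0 : β 0 = e)
    (hE : ∀ j, E j = (Finset.range (j + 1)).gcd β)
    (hβ : ∀ j, 1 ≤ j → E (j - 1) ≠ 1 →
      β j = sInf {i : ℕ | a i ≠ 0 ∧ ¬ (E (j - 1) ∣ i)})
    (hGn : E Gn = 1 ∧ ∀ j < Gn, E j ≠ 1)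
    (ω₀ : k) (hω₀ : ω₀ ^ e = 1) :
    ((Polynomial.nthRoots e (1 : k)).erase ω₀).map
        (fun ω => (PowerSeries.mk (fun i => a i * ω₀ ^ i)
          - PowerSeries.mk (fun i => a i * ω ^ i)).order)
      = (Finset.Icc 1 Gn).val.bind
          (fun j => Multiset.replicate (E (j - 1) - E j) ((β j : ℕ∞))) := by
  obtain rfl : E = prefixGcd β := funext hE
  have hEe (j : ℕ) : prefixGcd β j ∣ e := hβ0 ▸ prefixGcd_zero β ▸ prefixGcd_dvd_of_le β j.zero_le
  have hEpos (j : ℕ) : 0 < prefixGcd β j := Nat.pos_of_dvd_of_pos (hEe j) hepos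
  have hEne (j : ℕ) : (prefixGcd β j : k) ≠ 0 :=
    natCast_ne_zero_of_forall_charP hchar (hEpos j) (Nat.le_of_dvd hepos (hEe j))
  set μ : ℕ → Multiset k := fun j => nthRoots (prefixGcd β j) 1
  have hnodup (j : ℕ) : (μ j).Nodup := nthRoots_one_nodup_of_natCast_ne_zero (hEne j)
  have hcard (j : ℕ) : Multiset.card (μ j) = prefixGcd β j :=
    card_nthRoots_one_of_natCast_ne_zero (hEne j)
  have hanti : Antitone μ := fun i j hij =>
    nthRoots_one_le_of_dvd (prefixGcd_dvd_of_le β hij) (hEpos i) (hnodup j)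
  have hμ0 : μ 0 = nthRoots e 1 := by simp only [μ, prefixGcd_zero, hβ0]
  have hμGn : μ Gn = {1} := by simp only [μ, hGn.1, nthRoots, pow_one, roots_X_sub_C]
  rw [nthRoots_one_erase_eq_map_mul hepos (hμ0 ▸ hnodup 0) hω₀, Multiset.map_map, ← hμ0,
    ← Multiset.sub_singleton, ← hμGn, Multiset.tsub_eq_bind_Icc_of_antitone hanti,
    Multiset.map_bind]
  refine Multiset.bind_congr fun j hj => Multiset.eq_replicate.2 ⟨?_, ?_⟩
  · rw [Multiset.card_map, Multiset.card_sub (hanti (by omega)), hcard, hcard]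
  rintro _ hb
  obtain ⟨ζ, hζ, rfl⟩ := Multiset.mem_map.1 hb
  rw [mem_val, mem_Icc] at hj
  have hj1 : prefixGcd β (j - 1) ≠ 1 := hGn.2 (j - 1) (by omega)
  rw [Multiset.mem_sub_of_nodup (hnodup _), mem_nthRoots (hEpos _), mem_nthRoots (hEpos _)] at hζ
  have hgcd := prefixGcd_of_pos β hj.1
  rw [hβ j hj.1 hj1] at hgcd ⊢
  exact order_twist_sub_eq_sInf (IsUnit.of_pow_eq_one hω₀ hepos.ne').ne_zero
    (exists_ne_zero_not_dvd_of_primitive hprim (hEe _) hj1) hζ.1 (hgcd ▸ hζ.2)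

open Polynomial PowerSeries Finset in
/-- Let `F ∈ k[[x]][y]` be irreducible of degree `e` with primitive
Puiseux parametrization `(T^e, Σ a_i T^i)` (char `k` zero or `> e`, `k` algebraically
closed).  Its `e` Puiseux roots are `S(ω x^{1/e})` for `ω` an `e`-th root of unity; in the
variable `T` with `x = T^e` they are the series `Σ a_i ω^i T^i`.  For a fixed root `ω₀`,
the multiset of `T`-orders of the differences with the other roots (i.e. `e·val` of the
differences of Puiseux series) consists of the characteristic exponents `β_j`, each
repeated `E_{j-1} − E_j` times, for `j = 1, …, G`. -/
theorem multiset_of_root_differences {k : Type*} [Field k] [IsAlgClosed k] [DecidableEq k]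
    (e : ℕ) (hepos : 0 < e)
    (hchar : ∀ p : ℕ, CharP k p → p = 0 ∨ e < p)
    (F : Polynomial (PowerSeries k)) (hmonic : F.Monic) (hirr : Irreducible F)
    (hdeg : F.natDegree = e)
    (a : ℕ → k)
    (hparam : ∑ i ∈ range (e + 1),
        (PowerSeries.mk fun n : ℕ =>
          if e ∣ n then PowerSeries.coeff (n / e) (F.coeff i) else 0)
        * (PowerSeries.mk a) ^ i = 0)
    (hprim : ∀ q : ℕ, q ∣ e → (∀ i, a i ≠ 0 → q ∣ i) → q = 1)
    (β E : ℕ → ℕ) (Gn : ℕ)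
    (hβ0 : β 0 = e)
    (hE : ∀ j, E j = (Finset.range (j + 1)).gcd β)
    (hβ : ∀ j, 1 ≤ j → E (j - 1) ≠ 1 →
      β j = sInf {i : ℕ | a i ≠ 0 ∧ ¬ (E (j - 1) ∣ i)})
    (hGn : E Gn = 1 ∧ ∀ j < Gn, E j ≠ 1)
    (ω₀ : k) (hω₀ : ω₀ ^ e = 1) :
    ((Polynomial.nthRoots e (1 : k)).erase ω₀).map
        (fun ω => (PowerSeries.mk (fun i => a i * ω₀ ^ i)
          - PowerSeries.mk (fun i => a i * ω ^ i)).order)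
      = (Finset.Icc 1 Gn).val.bind
          (fun j => Multiset.replicate (E (j - 1) - E j) ((β j : ℕ∞))) :=
  multiset_of_root_differences_general e hepos hchar a hprim β E Gn hβ0 hE hβ hGn ω₀ hω₀
end
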